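/- arXiv:1507.08705 — 3 statements merged into one kernel-verified Lean document; each statement's English description precedes it below -/
import Mathlib

section
/- Let G be a finite simple undirected graph in which every vertex has degree at least 1, let α ∈ (0,1), and let π_v denote the personalized PageRank vector of source v. Suppose p, r : V → ℝ satisfy the invariant π_s[t] = p[t] + Σ_{v ∈ V} r[v] π_v[t] for all t ∈ V. Fix a vertex u and define the push step: p'[u] = p[u] + α r[u], p'[w] = p[w] for w ≠ u; r'[u] = 0, r'[w] = r[w] + (1-α) r[u]/d_u for every w adjacent to u, and r'[w] = r[w] for all other w. Then the invariant also holds for (p', r'): π_s[t] = p'[t] + Σ_{v ∈ V} r'[v] π_v[t] for all t ∈ V. -/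
open Finset

variable {V : Type*} [Fintype V] [DecidableEq V]

/-- The random-walk transition matrix of `G`: `W[u,v] = 1/dᵤ` if `u ~ v`, else `0`. -/
noncomputable def transMat (G : SimpleGraph V) [DecidableRel G.Adj] : Matrix V V ℝ :=
  fun u v => if G.Adj u v then ((G.degree u : ℝ))⁻¹ else 0

/-- Personalized PageRank: `π_s[t] = α ∑_{k≥0} (1-α)^k (W^k)[s,t]`. -/
noncomputable def ppr (G : SimpleGraph V) [DecidableRel G.Adj] (α : ℝ) (s t : V) : ℝ :=
  α * ∑' k : ℕ, (1 - α) ^ k * ((transMat G) ^ k) s t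

/-- The probability that a simple random walk traverses exactly the walk `p`:
the product of `1/dᵤ` over all vertices `u` of `p` except the last. -/
noncomputable def walkProb (G : SimpleGraph V) [DecidableRel G.Adj] {s t : V}
    (p : G.Walk s t) : ℝ :=
  (p.support.dropLast.map (fun u => ((G.degree u : ℝ))⁻¹)).prod

/-!
Personalized PageRank satisfies the one-step recurrence
`π_u = α e_u + (1 - α) ∑_w W[u,w] π_w`, obtained by splitting off the `k = 0` term of its
Neumann series. The push at `u` moves the mass `r[u] π_u` of the residual into
`α r[u] e_u` (added to `p`) and `(1 - α) r[u] ∑_w W[u,w] π_w` (spread over the neighbours of `u`),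
so by the recurrence the right-hand side of the invariant does not change.
-/

section Substochastic

variable {n : Type*} [Fintype n] [DecidableEq n] {M : Matrix n n ℝ}

lemma Matrix.pow_apply_mem_Icc_of_substochastic (hM : ∀ i j, 0 ≤ M i j)
    (hrow : ∀ i, ∑ j, M i j ≤ 1) (k : ℕ) (i j : n) : (M ^ k) i j ∈ Set.Icc 0 1 := by
  induction k generalizing i with
  | zero => by_cases h : i = j <;> simp [h]
  | succ k ih =>
    rw [pow_succ', Matrix.mul_apply]
    refine ⟨sum_nonneg fun w _ => mul_nonneg (hM i w) (ih w).1, ?_⟩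
    calc ∑ w, M i w * (M ^ k) w j ≤ ∑ w, M i w := by
          gcongr with w
          exact mul_le_of_le_one_right (hM i w) (ih w).2
      _ ≤ 1 := hrow i

lemma Matrix.summable_mul_pow_apply_of_substochastic (hM : ∀ i j, 0 ≤ M i j)
    (hrow : ∀ i, ∑ j, M i j ≤ 1) {c : ℝ} (hc : |c| < 1) (i j : n) :
    Summable fun k : ℕ => c ^ k * (M ^ k) i j := by
  refine (summable_geometric_of_lt_one (abs_nonneg c) hc).of_norm_bounded fun k => ?_
  obtain ⟨h0, h1⟩ := Matrix.pow_apply_mem_Icc_of_substochastic hM hrow k i j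
  rw [norm_mul, norm_pow, Real.norm_eq_abs, Real.norm_eq_abs, abs_of_nonneg h0]
  exact mul_le_of_le_one_right (by positivity) h1

lemma Matrix.tsum_mul_pow_apply_eq_one_add (M : Matrix n n ℝ) (c : ℝ)
    (hs : ∀ i j, Summable fun k : ℕ => c ^ k * (M ^ k) i j) (i j : n) :
    ∑' k : ℕ, c ^ k * (M ^ k) i j
      = (1 : Matrix n n ℝ) i j + c * ∑ w, M i w * ∑' k : ℕ, c ^ k * (M ^ k) w j := by
  have hsucc (k : ℕ) : c ^ (k + 1) * (M ^ (k + 1)) i j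
      = ∑ w, c * (M i w * (c ^ k * (M ^ k) w j)) := by
    rw [pow_succ' M, Matrix.mul_apply, mul_sum]
    exact sum_congr rfl fun w _ => by ring
  rw [(hs i j).tsum_eq_zero_add, pow_zero, pow_zero, one_mul]
  simp_rw [hsucc]
  rw [Summable.tsum_finsetSum fun w _ => ((hs w j).mul_left (M i w)).mul_left c, mul_sum]
  simp_rw [tsum_mul_left]

end Substochastic

section PageRank

variable {ι : Type*} [Fintype ι] (G : SimpleGraph ι) [DecidableRel G.Adj]

lemma transMat_nonneg (u v : ι) : 0 ≤ transMat G u v := by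
  unfold transMat; split_ifs <;> positivity

lemma transMat_self (u : ι) : transMat G u u = 0 := by
  simp [transMat]

lemma sum_transMat_le_one (u : ι) : ∑ v, transMat G u v ≤ 1 := by
  have hfilter : univ.filter (G.Adj u) = G.neighborFinset u := by ext; simp
  simp only [transMat]
  rw [← sum_filter, hfilter, sum_const, G.card_neighborFinset_eq_degree, nsmul_eq_mul]
  exact mul_inv_le_one

variable [DecidableEq ι] {G}

lemma ppr_eq_add {α : ℝ} (hα : |1 - α| < 1) (u t : ι) :
    ppr G α u t = α * (1 : Matrix ι ι ℝ) u t + (1 - α) * ∑ w, transMat G u w * ppr G α w t := by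
  have hs := Matrix.summable_mul_pow_apply_of_substochastic (transMat_nonneg G)
    (sum_transMat_le_one G) hα
  unfold ppr
  rw [Matrix.tsum_mul_pow_apply_eq_one_add _ _ hs, mul_add, mul_sum, mul_sum, mul_sum]
  congr 1
  exact sum_congr rfl fun w _ => by ring

lemma push_residual_eq {α : ℝ} {r r' : ι → ℝ} {u : ι}
    (hr' : ∀ w, r' w = if w = u then 0
        else if G.Adj u w then r w + (1 - α) * r u / (G.degree u : ℝ) else r w) (v : ι) :
    r' v = r v - (if v = u then r u else 0) + (1 - α) * r u * transMat G u v := by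
  rw [hr']
  by_cases hvu : v = u
  · subst hvu
    simp [transMat_self]
  · by_cases hadj : G.Adj u v <;> simp [transMat, hvu, hadj, div_eq_mul_inv]

lemma sum_mul_eq_of_push {α : ℝ} {r r' : ι → ℝ} {u : ι}
    (hr' : ∀ w, r' w = if w = u then 0
        else if G.Adj u w then r w + (1 - α) * r u / (G.degree u : ℝ) else r w) (f : ι → ℝ) :
    ∑ v, r' v * f v
      = ∑ v, r v * f v - r u * f u + (1 - α) * r u * ∑ v, transMat G u v * f v := by
  simp only [push_residual_eq hr', add_mul, sub_mul, sum_add_distrib, sum_sub_distrib, ite_mul,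
    zero_mul, sum_ite_eq', mem_univ, if_true, mul_sum, mul_assoc]

end PageRank

theorem push_preserves_invariant_general (G : SimpleGraph V) [DecidableRel G.Adj]
    (α : ℝ) (hα : α ∈ Set.Ioo (0 : ℝ) 1)
    (s : V) (p r : V → ℝ)
    (hinv : ∀ t, ppr G α s t = p t + ∑ v, r v * ppr G α v t)
    (u : V) (p' r' : V → ℝ)
    (hp' : ∀ w, p' w = if w = u then p u + α * r u else p w)
    (hr' : ∀ w, r' w = if w = u then 0
        else if G.Adj u w then r w + (1 - α) * r u / (G.degree u : ℝ) else r w) :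
    ∀ t, ppr G α s t = p' t + ∑ v, r' v * ppr G α v t := by
  intro t
  have hrec := ppr_eq_add (G := G) (abs_lt.2 ⟨by linarith [hα.2], by linarith [hα.1]⟩) u t
  rw [hp', sum_mul_eq_of_push hr', hinv t]
  rcases eq_or_ne t u with rfl | htu
  · simp only [if_true, Matrix.one_apply_eq] at hrec ⊢
    linear_combination (r t) * hrec
  · simp only [if_neg htu, Matrix.one_apply_ne htu.symm] at hrec ⊢
    linear_combination (r u) * hrec

theorem push_preserves_invariant (G : SimpleGraph V) [DecidableRel G.Adj]
    (hdeg : ∀ v, 0 < G.degree v) (α : ℝ) (hα : α ∈ Set.Ioo (0 : ℝ) 1)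
    (s : V) (p r : V → ℝ)
    (hinv : ∀ t, ppr G α s t = p t + ∑ v, r v * ppr G α v t)
    (u : V) (p' r' : V → ℝ)
    (hp' : ∀ w, p' w = if w = u then p u + α * r u else p w)
    (hr' : ∀ w, r' w = if w = u then 0
        else if G.Adj u w then r w + (1 - α) * r u / (G.degree u : ℝ) else r w) :
    ∀ t, ppr G α s t = p' t + ∑ v, r' v * ppr G α v t :=
  push_preserves_invariant_general G α hα s p r hinv u p' r' hp' hr'
end

section
/- Let G be a finite simple undirected graph in which every vertex has degree at least 1, let α ∈ (0,1), let r_max > 0, and fix a source vertex s. Let r_0 = e_s (the indicator vector of s), and for k = 1, ..., T let r_k be obtained from r_{k-1} by the push step at some vertex v_k satisfying r_{k-1}[v_k] > r_max · d_{v_k}, where the push step at u sets r_k[u] = 0, r_k[w] = r_{k-1}[w] + (1-α) r_{k-1}[u]/d_u for each w adjacent to u, and r_k[w] = r_{k-1}[w] otherwise. Then Σ_{k=1}^{T} d_{v_k} ≤ 1/(α r_max). -/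
open Finset

variable {V : Type*} [Fintype V] [DecidableEq V]

theorem pushes_degree_sum_le (G : SimpleGraph V) [DecidableRel G.Adj]
    (hdeg : ∀ v, 0 < G.degree v) (α : ℝ) (hα : α ∈ Set.Ioo (0 : ℝ) 1)
    (rmax : ℝ) (hrmax : 0 < rmax) (s : V) (T : ℕ)
    (r : ℕ → V → ℝ) (v : ℕ → V)
    (hr0 : ∀ w, r 0 w = if w = s then 1 else 0)
    (hpush : ∀ k, 1 ≤ k → k ≤ T →
      r (k - 1) (v k) > rmax * (G.degree (v k) : ℝ) ∧
      ∀ w, r k w = if w = v k then 0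
        else if G.Adj (v k) w then
          r (k - 1) w + (1 - α) * r (k - 1) (v k) / (G.degree (v k) : ℝ)
        else r (k - 1) w) :
    ∑ k ∈ Finset.Icc 1 T, (G.degree (v k) : ℝ) ≤ 1 / (α * rmax) := by
  obtain ⟨hα0, hα1⟩ := hα
  have h1α : (0:ℝ) ≤ 1 - α := by linarith
  -- nonnegativity of residuals
  have hnonneg : ∀ k, k ≤ T → ∀ w, 0 ≤ r k w := by
    intro k
    induction k with
    | zero => intro _ w; rw [hr0]; split <;> norm_num
    | succ k ih =>
      intro hk w
      obtain ⟨hgt, heq⟩ := hpush (k+1) (by omega) hk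
      simp only [Nat.add_sub_cancel] at hgt heq
      rw [heq w]
      have hk' : k ≤ T := by omega
      have hd : (0:ℝ) < (G.degree (v (k+1)) : ℝ) := by exact_mod_cast hdeg _
      have hrv : 0 ≤ r k (v (k+1)) := ih hk' _
      split
      · exact le_refl 0
      · split
        · exact add_nonneg (ih hk' w) (div_nonneg (mul_nonneg h1α hrv) hd.le)
        · exact ih hk' w
  -- one-step mass decrease
  have hstep : ∀ k, 1 ≤ k → k ≤ T →
      ∑ w, r k w = ∑ w, r (k-1) w - α * r (k-1) (v k) := by
    intro k hk1 hkT
    obtain ⟨hgt, heq⟩ := hpush k hk1 hkT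
    have hd : (0:ℝ) < (G.degree (v k) : ℝ) := by exact_mod_cast hdeg _
    have hdiff : ∀ w, r k w - r (k-1) w =
        if w = v k then -r (k-1) (v k)
        else if G.Adj (v k) w then (1-α) * r (k-1) (v k) / (G.degree (v k):ℝ) else 0 := by
      intro w; rw [heq w]
      split
      · next h => subst h; ring
      · split <;> ring
    have hsumdiff : ∑ w, (r k w - r (k-1) w) = -(α * r (k-1) (v k)) := by
      rw [Finset.sum_congr rfl (fun w _ => hdiff w)]
      rw [← Finset.add_sum_erase _ _ (Finset.mem_univ (v k))]
      rw [if_pos rfl]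
      have herase : ∀ w ∈ Finset.univ.erase (v k),
          (if w = v k then -r (k-1) (v k)
           else if G.Adj (v k) w then (1-α) * r (k-1) (v k) / (G.degree (v k):ℝ) else 0)
          = if G.Adj (v k) w then (1-α) * r (k-1) (v k) / (G.degree (v k):ℝ) else 0 := by
        intro w hw
        rw [if_neg (Finset.ne_of_mem_erase hw)]
      rw [Finset.sum_congr rfl herase]
      have hfull : ∑ w ∈ Finset.univ.erase (v k),
          (if G.Adj (v k) w then (1-α) * r (k-1) (v k) / (G.degree (v k):ℝ) else 0)
          = ∑ w, (if G.Adj (v k) w then (1-α) * r (k-1) (v k) / (G.degree (v k):ℝ) else 0) := by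
        rw [Finset.sum_erase]
        rw [if_neg (G.irrefl)]
      rw [hfull]
      have hcount : ∑ w, (if G.Adj (v k) w then (1-α) * r (k-1) (v k) / (G.degree (v k):ℝ) else 0)
          = (G.degree (v k) : ℝ) * ((1-α) * r (k-1) (v k) / (G.degree (v k):ℝ)) := by
        rw [← Finset.sum_filter]
        have hfilt : Finset.univ.filter (G.Adj (v k)) = G.neighborFinset (v k) := by
          ext w; simp [SimpleGraph.mem_neighborFinset]
        rw [hfilt, Finset.sum_const, SimpleGraph.card_neighborFinset_eq_degree,
          nsmul_eq_mul]
      rw [hcount]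
      field_simp
      ring
    rw [Finset.sum_sub_distrib] at hsumdiff
    linarith [hsumdiff]
  -- telescoping
  have htel : ∀ n, n ≤ T →
      ∑ w, r n w = 1 - ∑ k ∈ Finset.Icc 1 n, α * r (k-1) (v k) := by
    intro n
    induction n with
    | zero =>
      intro _
      simp only [Finset.Icc_eq_empty_of_lt (by norm_num : (0:ℕ) < 1), Finset.sum_empty,
        sub_zero]
      rw [Finset.sum_congr rfl (fun w _ => hr0 w), Finset.sum_ite_eq' Finset.univ s (fun _ => (1:ℝ))]
      simp
    | succ n ih =>
      intro hn
      rw [hstep (n+1) (by omega) hn]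
      simp only [Nat.add_sub_cancel]
      rw [ih (by omega), Finset.sum_Icc_succ_top (by omega : 1 ≤ n + 1)]
      simp only [Nat.add_sub_cancel, Nat.add_sub_cancel_left]
      ring
  have hST := htel T le_rfl
  have hSTnn : 0 ≤ ∑ w, r T w := Finset.sum_nonneg fun w _ => hnonneg T le_rfl w
  have hsum_le : ∑ k ∈ Finset.Icc 1 T, α * r (k-1) (v k) ≤ 1 := by linarith
  have hterm : ∀ k ∈ Finset.Icc 1 T, α * (rmax * (G.degree (v k):ℝ)) ≤ α * r (k-1) (v k) := by
    intro k hk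
    rw [Finset.mem_Icc] at hk
    exact mul_le_mul_of_nonneg_left (le_of_lt (hpush k hk.1 hk.2).1) hα0.le
  have hkey : ∑ k ∈ Finset.Icc 1 T, α * (rmax * (G.degree (v k):ℝ)) ≤ 1 :=
    le_trans (Finset.sum_le_sum hterm) hsum_le
  rw [le_div_iff₀ (by positivity)]
  calc (∑ k ∈ Finset.Icc 1 T, (G.degree (v k):ℝ)) * (α * rmax)
      = ∑ k ∈ Finset.Icc 1 T, α * (rmax * (G.degree (v k):ℝ)) := by
        rw [Finset.sum_mul]; exact Finset.sum_congr rfl fun k _ => by ring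
    _ ≤ 1 := hkey
end

section
/- Let ε ∈ (0,1], δ > 0, B > 0, p_fail ∈ (0,1), and set c = 3 ln(2/p_fail) and w = ⌈c B/(ε² δ)⌉. Let X_1, ..., X_w be independent, identically distributed real random variables on a probability space, each taking values in [0, B], with common mean μ = E[X_1], and let X̄ = (1/w) Σ_{i=1}^w X_i. Then P[ |X̄ − μ| > max(ε μ, 2e δ) ] ≤ p_fail. -/
/-!
A variable `X ∈ [0, B]` is dominated in the convex order by `B` times a Bernoulli variable
with the same mean, so by independence the mgf of `S = ∑ X i` is at most that of `B` times a
Poisson variable of mean `w m / B`. Chernoff's bound with `t = log (1 ± ε) / B` gives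
`P(|S - w m| > ε w m) ≤ 2 exp (-ε² w m / (3 B))`, which settles the case `m ≥ δ`. For `m < δ`
a downward deviation by `2 e w δ` would make `S` negative, and `t = 1 / B` bounds the upward
one by `exp (-(w m + 2 e w δ) / (2 B))`. The choice of `w` makes `ε² w δ / B ≥ c`.
-/

open MeasureTheory ProbabilityTheory Real Set

lemma sq_div_three_le_one_add_mul_log_one_add_sub {ε : ℝ} (h0 : 0 ≤ ε) (h1 : ε ≤ 1) :
    ε ^ 2 / 3 ≤ (1 + ε) * log (1 + ε) - ε := by
  have hlog :=
    mul_le_mul_of_nonneg_left (le_log_one_add_of_nonneg h0) (by linarith : 0 ≤ 1 + ε)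
  have hid : (1 + ε) * (2 * ε / (ε + 2)) - ε = ε ^ 2 / (ε + 2) := by field_simp; ring
  have : ε ^ 2 / 3 ≤ ε ^ 2 / (ε + 2) := by gcongr; linarith
  linarith

lemma sq_div_three_le_one_sub_mul_log_one_sub_add {ε : ℝ} (h0 : 0 ≤ ε) (h1 : ε < 1) :
    ε ^ 2 / 3 ≤ (1 - ε) * log (1 - ε) + ε := by
  have h2 : 2 - ε ≠ 0 := by linarith
  have h1' : 1 - ε ≠ 0 := by linarith
  set x := ε / (2 - ε) with hx
  have hx0 : 0 ≤ x := div_nonneg h0 (by linarith)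
  have hx1 : x < 1 := (div_lt_one (by linarith)).2 (by linarith)
  -- as `(1 + x) / (1 - x) = (1 - ε)⁻¹`, this is `log t ≤ (t - t⁻¹) / 2` at `t = (1 - ε)⁻¹`
  have h := log_div_le_sum_range_add hx0 hx1 0
  have hratio : (1 + x) / (1 - x) = (1 - ε)⁻¹ := by
    rw [inv_eq_one_div, div_eq_div_iff (by linarith) (by linarith), hx]
    field_simp
    ring
  have hrhs : x / (1 - x ^ 2) = ε * (2 - ε) / (4 * (1 - ε)) := by
    rw [div_eq_div_iff (by nlinarith) (by linarith), hx]
    field_simp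
    ring
  simp only [Finset.range_zero, Finset.sum_empty, zero_add, mul_zero, pow_one, hratio, log_inv,
    hrhs] at h
  have hmul := mul_le_mul_of_nonneg_left h (by linarith : 0 ≤ 2 * (1 - ε))
  have hid : 2 * (1 - ε) * (ε * (2 - ε) / (4 * (1 - ε))) = ε - ε ^ 2 / 2 := by
    field_simp
    ring
  nlinarith

lemma exp_mul_le_one_add_div_mul_exp_sub_one {B x : ℝ} (hB : 0 < B) (hx : x ∈ Icc 0 B)
    (t : ℝ) :
    exp (t * x) ≤ 1 + x / B * (exp (t * B) - 1) := by
  have hcx := convexOn_exp.2 (mem_univ 0) (mem_univ (t * B))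
    (show 0 ≤ 1 - x / B by rw [sub_nonneg]; exact div_le_one_of_le₀ hx.2 hB.le)
    (div_nonneg hx.1 hB.le) (by ring)
  simp only [smul_eq_mul, mul_zero, zero_add, exp_zero, mul_one,
    show x / B * (t * B) = t * x by field_simp] at hcx
  linarith

section Chernoff

variable {Ω : Type*} [MeasurableSpace Ω] {μ : Measure Ω} {B : ℝ}

lemma mgf_le_exp_of_mem_Icc [IsProbabilityMeasure μ] {X : Ω → ℝ} (hX : AEMeasurable X μ)
    (hB : 0 < B) (hXB : ∀ᵐ ω ∂μ, X ω ∈ Icc 0 B) (t : ℝ) :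
    mgf X μ t ≤ exp (μ[X] / B * (exp (t * B) - 1)) := by
  have hint : Integrable X μ := Integrable.of_mem_Icc 0 B hX hXB
  calc mgf X μ t ≤ ∫ ω, (1 + X ω / B * (exp (t * B) - 1)) ∂μ := by
        refine integral_mono_ae (integrable_exp_mul_of_mem_Icc hX hXB) ?_ ?_
        · exact (integrable_const 1).add ((hint.div_const B).mul_const _)
        · filter_upwards [hXB] with ω hω using exp_mul_le_one_add_div_mul_exp_sub_one hB hω t
    _ = 1 + μ[X] / B * (exp (t * B) - 1) := by
        rw [integral_add (integrable_const 1) ((hint.div_const B).mul_const _),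
          integral_mul_const, integral_div]
        simp
    _ ≤ exp (μ[X] / B * (exp (t * B) - 1)) := by
        linarith [add_one_le_exp (μ[X] / B * (exp (t * B) - 1))]

lemma ProbabilityTheory.iIndepFun.mgf_sum_le_of_mem_Icc {ι : Type*} {X : ι → Ω → ℝ}
    (hindep : iIndepFun X μ) (hX : ∀ i, Measurable (X i)) (hB : 0 < B)
    (hXB : ∀ i, ∀ᵐ ω ∂μ, X i ω ∈ Icc 0 B)
    (s : Finset ι) (t : ℝ) :
    mgf (∑ i ∈ s, X i) μ t ≤ exp ((∑ i ∈ s, μ[X i]) / B * (exp (t * B) - 1)) := by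
  have := hindep.isProbabilityMeasure
  rw [hindep.mgf_sum hX, Finset.sum_div, Finset.sum_mul, exp_sum]
  exact Finset.prod_le_prod (fun i _ => mgf_nonneg)
    fun i _ => mgf_le_exp_of_mem_Icc (hX i).aemeasurable hB (hXB i) t

/-- The mgf of `S` is at most that of `B • N` with `N` Poisson of mean `M / B`. -/
structure HasScaledPoissonMGF (S : Ω → ℝ) (M B : ℝ) (μ : Measure Ω) : Prop where
  integrable_exp_mul (t : ℝ) : Integrable (fun ω => exp (t * S ω)) μ
  mgf_le (t : ℝ) : mgf S μ t ≤ exp (M / B * (exp (t * B) - 1))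

lemma ProbabilityTheory.iIndepFun.hasScaledPoissonMGF_sum {ι : Type*} {X : ι → Ω → ℝ}
    (hindep : iIndepFun X μ) (hX : ∀ i, Measurable (X i)) (hB : 0 < B)
    (hXB : ∀ i, ∀ᵐ ω ∂μ, X i ω ∈ Icc 0 B)
    (s : Finset ι) : HasScaledPoissonMGF (∑ i ∈ s, X i) (∑ i ∈ s, μ[X i]) B μ where
  integrable_exp_mul t := by
    have := hindep.isProbabilityMeasure
    exact hindep.integrable_exp_mul_sum hX fun i _ =>
      integrable_exp_mul_of_mem_Icc (hX i).aemeasurable (hXB i)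
  mgf_le := hindep.mgf_sum_le_of_mem_Icc hX hB hXB s

namespace HasScaledPoissonMGF

variable [IsFiniteMeasure μ] {S : Ω → ℝ} {M : ℝ}

lemma measureReal_ge_le (h : HasScaledPoissonMGF S M B μ) {t : ℝ} (ht : 0 ≤ t) (T : ℝ) :
    μ.real {ω | T ≤ S ω} ≤ exp (-t * T + M / B * (exp (t * B) - 1)) := by
  rw [exp_add]
  exact (measure_ge_le_exp_mul_mgf T ht (h.integrable_exp_mul t)).trans
    (mul_le_mul_of_nonneg_left (h.mgf_le t) (exp_pos _).le)

lemma measureReal_le_le (h : HasScaledPoissonMGF S M B μ) {t : ℝ} (ht : t ≤ 0) (T : ℝ) :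
    μ.real {ω | S ω ≤ T} ≤ exp (-t * T + M / B * (exp (t * B) - 1)) := by
  rw [exp_add]
  exact (measure_le_le_exp_mul_mgf T ht (h.integrable_exp_mul t)).trans
    (mul_le_mul_of_nonneg_left (h.mgf_le t) (exp_pos _).le)

lemma measureReal_one_add_mul_le_le (h : HasScaledPoissonMGF S M B μ) (hB : 0 < B) (hM : 0 ≤ M)
    {ε : ℝ} (h0 : 0 ≤ ε) (h1 : ε ≤ 1) :
    μ.real {ω | (1 + ε) * M ≤ S ω} ≤ exp (-(ε ^ 2 * M / (3 * B))) := by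
  refine (h.measureReal_ge_le (t := log (1 + ε) / B)
    (div_nonneg (log_nonneg (by linarith)) hB.le) _).trans ?_
  rw [div_mul_cancel₀ _ hB.ne', exp_log (by linarith), exp_le_exp]
  have hlog := mul_le_mul_of_nonneg_left (sq_div_three_le_one_add_mul_log_one_add_sub h0 h1)
    (div_nonneg hM hB.le)
  have hexponent : -(log (1 + ε) / B) * ((1 + ε) * M) + M / B * (1 + ε - 1)
      = -(M / B * ((1 + ε) * log (1 + ε) - ε)) := by ring
  have hrescale : ε ^ 2 * M / (3 * B) = M / B * (ε ^ 2 / 3) := by ring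
  linarith

lemma measureReal_lt_one_sub_mul_le (h : HasScaledPoissonMGF S M B μ) (hB : 0 < B) (hM : 0 ≤ M)
    (hS : ∀ᵐ ω ∂μ, 0 ≤ S ω) {ε : ℝ} (h0 : 0 ≤ ε) (h1 : ε ≤ 1) :
    μ.real {ω | S ω < (1 - ε) * M} ≤ exp (-(ε ^ 2 * M / (3 * B))) := by
  rcases h1.lt_or_eq with h1 | rfl
  · refine (measureReal_mono fun ω (hω : S ω < _) => hω.le).trans <|
      (h.measureReal_le_le (t := log (1 - ε) / B) (div_nonpos_of_nonpos_of_nonneg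
        (log_nonpos (by linarith) (by linarith)) hB.le) _).trans ?_
    rw [div_mul_cancel₀ _ hB.ne', exp_log (by linarith), exp_le_exp]
    have hlog := mul_le_mul_of_nonneg_left (sq_div_three_le_one_sub_mul_log_one_sub_add h0 h1)
      (div_nonneg hM hB.le)
    have hexponent : -(log (1 - ε) / B) * ((1 - ε) * M) + M / B * (1 - ε - 1)
        = -(M / B * ((1 - ε) * log (1 - ε) + ε)) := by ring
    have hrescale : ε ^ 2 * M / (3 * B) = M / B * (ε ^ 2 / 3) := by ring
    linarith
  · have hnull : μ {ω | S ω < (1 - 1) * M} = 0 := by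
      rw [measure_eq_zero_iff_ae_notMem]
      filter_upwards [hS] with ω hω
      simpa using hω
    simp only [measureReal_def, hnull, ENNReal.toReal_zero]
    positivity

lemma measureReal_mul_lt_abs_sub_le (h : HasScaledPoissonMGF S M B μ) (hB : 0 < B) (hM : 0 ≤ M)
    (hS : ∀ᵐ ω ∂μ, 0 ≤ S ω) {ε : ℝ} (h0 : 0 ≤ ε) (h1 : ε ≤ 1) :
    μ.real {ω | ε * M < |S ω - M|} ≤ 2 * exp (-(ε ^ 2 * M / (3 * B))) := by
  have hsub : {ω | ε * M < |S ω - M|} ⊆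
      {ω | (1 + ε) * M ≤ S ω} ∪ {ω | S ω < (1 - ε) * M} := by
    intro ω (hω : ε * M < |S ω - M|)
    rcases lt_abs.1 hω with hω | hω
    · exact .inl (show (1 + ε) * M ≤ S ω by linarith)
    · exact .inr (show S ω < (1 - ε) * M by linarith)
  calc μ.real {ω | ε * M < |S ω - M|}
      ≤ μ.real {ω | (1 + ε) * M ≤ S ω} + μ.real {ω | S ω < (1 - ε) * M} :=
        (measureReal_mono hsub).trans (measureReal_union_le _ _)
    _ ≤ 2 * exp (-(ε ^ 2 * M / (3 * B))) := by
        linarith [h.measureReal_one_add_mul_le_le hB hM h0 h1,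
          h.measureReal_lt_one_sub_mul_le hB hM hS h0 h1]

lemma measureReal_ge_le_exp_neg_half (h : HasScaledPoissonMGF S M B μ) (hB : 0 < B) (hM : 0 ≤ M)
    {T : ℝ} (hT : 2 * exp 1 * M ≤ T) :
    μ.real {ω | T ≤ S ω} ≤ exp (-(T / (2 * B))) := by
  refine (h.measureReal_ge_le (one_div_nonneg.2 hB.le) T).trans ?_
  rw [one_div_mul_cancel hB.ne', exp_le_exp,
    show -(1 / B) * T + M / B * (exp 1 - 1) = (M * (exp 1 - 1) - T) / B by ring,
    show -(T / (2 * B)) = -(T / 2) / B by ring]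
  gcongr
  linarith

lemma measureReal_max_lt_abs_sub_le (h : HasScaledPoissonMGF S M B μ) (hB : 0 < B) (hM : 0 ≤ M)
    (hS : ∀ᵐ ω ∂μ, 0 ≤ S ω) {ε Δ : ℝ} (h0 : 0 ≤ ε) (h1 : ε ≤ 1) (hΔ : 0 ≤ Δ) :
    μ.real {ω | max (ε * M) (2 * exp 1 * Δ) < |S ω - M|}
      ≤ 2 * exp (-(ε ^ 2 * Δ / (3 * B))) := by
  have he : 1 ≤ exp 1 := one_le_exp zero_le_one
  rcases le_or_gt Δ M with hΔM | hMΔ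
  · calc μ.real {ω | max (ε * M) (2 * exp 1 * Δ) < |S ω - M|}
          ≤ μ.real {ω | ε * M < |S ω - M|} :=
          measureReal_mono fun _ => (le_max_left (ε * M) _).trans_lt
      _ ≤ 2 * exp (-(ε ^ 2 * M / (3 * B))) := h.measureReal_mul_lt_abs_sub_le hB hM hS h0 h1
      _ ≤ 2 * exp (-(ε ^ 2 * Δ / (3 * B))) := by gcongr
  · have hsub : {ω | max (ε * M) (2 * exp 1 * Δ) < |S ω - M|}
        ≤ᵐ[μ] {ω | M + 2 * exp 1 * Δ ≤ S ω} := by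
      filter_upwards [hS] with ω hω (hlt : _ < |S ω - M|)
      rcases lt_abs.1 ((le_max_right _ _).trans_lt hlt) with hlt | hlt
      · exact (show M + 2 * exp 1 * Δ ≤ S ω by linarith)
      · nlinarith
    have hexp : ε ^ 2 * Δ / (3 * B) ≤ (M + 2 * exp 1 * Δ) / (2 * B) := by
      rw [div_le_div_iff₀ (by positivity) (by positivity)]
      have hεΔ : ε ^ 2 * Δ ≤ Δ := mul_le_of_le_one_left hΔ (pow_le_one₀ h0 h1)
      nlinarith [mul_le_mul_of_nonneg_right hεΔ hB.le, mul_nonneg hM hB.le,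
        mul_le_mul_of_nonneg_right he (mul_nonneg hΔ hB.le)]
    calc _ ≤ μ.real {ω | M + 2 * exp 1 * Δ ≤ S ω} :=
          ENNReal.toReal_mono (measure_ne_top _ _) (measure_mono_ae hsub)
      _ ≤ exp (-((M + 2 * exp 1 * Δ) / (2 * B))) :=
          h.measureReal_ge_le_exp_neg_half hB hM (by nlinarith)
      _ ≤ 2 * exp (-(ε ^ 2 * Δ / (3 * B))) :=
          (exp_le_exp.2 (neg_le_neg hexp)).trans
            (le_mul_of_one_le_left (exp_pos _).le one_le_two)

lemma measureReal_max_lt_abs_div_sub_le {n m : ℝ} (h : HasScaledPoissonMGF S (n * m) B μ)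
    (hB : 0 < B) (hn : 0 < n) (hm : 0 ≤ m) (hS : ∀ᵐ ω ∂μ, 0 ≤ S ω) {ε δ : ℝ} (h0 : 0 ≤ ε)
    (h1 : ε ≤ 1) (hδ : 0 ≤ δ) :
    μ.real {ω | max (ε * m) (2 * exp 1 * δ) < |S ω / n - m|}
      ≤ 2 * exp (-(ε ^ 2 * (n * δ) / (3 * B))) := by
  refine le_trans (measureReal_mono fun ω (hω : _ < |S ω / n - m|) => ?_)
    (h.measureReal_max_lt_abs_sub_le hB (by positivity) hS h0 h1 (by positivity))
  rw [div_sub' hn.ne', abs_div, abs_of_pos hn, lt_div_iff₀ hn] at hω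
  have hmax : max (ε * (n * m)) (2 * exp 1 * (n * δ)) = max (ε * m) (2 * exp 1 * δ) * n := by
    rw [max_mul_of_nonneg _ _ hn.le]
    congr 1 <;> ring
  exact hmax.trans_lt hω

end HasScaledPoissonMGF

end Chernoff

theorem chernoff_estimate_accuracy_general
    {Ω : Type*} [MeasurableSpace Ω] (μ : Measure Ω) [IsProbabilityMeasure μ]
    (ε δ B pfail : ℝ) (hε : ε ∈ Set.Ioc (0 : ℝ) 1) (hδ : 0 < δ) (hB : 0 < B)
    (hpfail : pfail ∈ Set.Ioo (0 : ℝ) 1)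
    (c : ℝ) (hc : c = 3 * Real.log (2 / pfail))
    (w : ℕ) (hw : w = ⌈c * B / (ε ^ 2 * δ)⌉₊)
    (X : Fin w → Ω → ℝ)
    (hmeas : ∀ i, Measurable (X i))
    (hindep : iIndepFun X μ)
    (hbound : ∀ i ω, X i ω ∈ Set.Icc (0 : ℝ) B)
    (m : ℝ) (hm : ∀ i, m = ∫ ω, X i ω ∂μ) :
    μ {ω | |(∑ i, X i ω) / (w : ℝ) - m| > max (ε * m) (2 * Real.exp 1 * δ)}
      ≤ ENNReal.ofReal pfail := by
  obtain ⟨hε0, hε1⟩ := hε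
  obtain ⟨hp0, hp1⟩ := hpfail
  have hc0 : 0 < c := by
    rw [hc]
    exact mul_pos three_pos (log_pos ((one_lt_div hp0).2 (by linarith)))
  have hwc : c / 3 ≤ ε ^ 2 * (w * δ) / (3 * B) := by
    have hceil := hw ▸ Nat.le_ceil (c * B / (ε ^ 2 * δ))
    rw [div_le_iff₀ (by positivity)] at hceil
    rw [div_le_div_iff₀ three_pos (by positivity)]
    linarith
  have hw0 : (0 : ℝ) < w := Nat.cast_pos.2 (hw ▸ Nat.ceil_pos.2 (by positivity))
  have hm0 : 0 ≤ m := by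
    obtain ⟨i⟩ : Nonempty (Fin w) := ⟨⟨0, by exact_mod_cast hw0⟩⟩
    exact hm i ▸ integral_nonneg fun ω => (hbound i ω).1
  have hpoisson : HasScaledPoissonMGF (∑ i, X i) (w * m) B μ := by
    simpa [← hm] using
      hindep.hasScaledPoissonMGF_sum hmeas hB (fun i => ae_of_all _ (hbound i)) Finset.univ
  have hS0 : ∀ᵐ ω ∂μ, 0 ≤ (∑ i, X i) ω := ae_of_all _ fun ω =>
    Finset.sum_apply ω _ X ▸ Finset.sum_nonneg fun i _ => (hbound i ω).1
  rw [ENNReal.le_ofReal_iff_toReal_le (measure_ne_top _ _) hp0.le, ← measureReal_def]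
  simp only [gt_iff_lt, ← Finset.sum_apply]
  calc _ ≤ 2 * exp (-(ε ^ 2 * (w * δ) / (3 * B))) :=
        hpoisson.measureReal_max_lt_abs_div_sub_le hB hw0 hm0 hS0 hε0.le hε1 hδ.le
    _ ≤ 2 * exp (-(c / 3)) := by gcongr
    _ = pfail := by
      rw [hc, mul_div_cancel_left₀ _ three_ne_zero, exp_neg, exp_log (by positivity), inv_div]
      ring

theorem chernoff_estimate_accuracy
    {Ω : Type*} [MeasurableSpace Ω] (μ : Measure Ω) [IsProbabilityMeasure μ]
    (ε δ B pfail : ℝ) (hε : ε ∈ Set.Ioc (0 : ℝ) 1) (hδ : 0 < δ) (hB : 0 < B)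
    (hpfail : pfail ∈ Set.Ioo (0 : ℝ) 1)
    (c : ℝ) (hc : c = 3 * Real.log (2 / pfail))
    (w : ℕ) (hw : w = ⌈c * B / (ε ^ 2 * δ)⌉₊)
    (X : Fin w → Ω → ℝ)
    (hmeas : ∀ i, Measurable (X i))
    (hindep : iIndepFun X μ)
    (hident : ∀ i j, IdentDistrib (X i) (X j) μ μ)
    (hbound : ∀ i ω, X i ω ∈ Set.Icc (0 : ℝ) B)
    (m : ℝ) (hm : ∀ i, m = ∫ ω, X i ω ∂μ) :
    μ {ω | |(∑ i, X i ω) / (w : ℝ) - m| > max (ε * m) (2 * Real.exp 1 * δ)}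
      ≤ ENNReal.ofReal pfail :=
  chernoff_estimate_accuracy_general μ ε δ B pfail hε hδ hB hpfail c hc w hw X hmeas hindep hbound m
    hm
end
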